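/- In the initial quotient term algebra over the Simple Crypto Algebra signature, every equivalence class of terms contains exactly one term with no occurrence of the inverse operation (·)⁻¹; that is, every term is equal (modulo the equations) to a unique inverse-free term. -/

import Mathlib

/-- The sorts of the Simple Crypto Algebra signature. -/
inductive RSort : Type
  | top | A | S | D
deriving DecidableEq

/-- Raw terms over the Simple Crypto Algebra signature (the signature has key
constants `a_i`, `b_i` of sort A and `s_i` of sort S, pairing, asymmetric and
symmetric encryption, and key inverse; sort D has no constants or operations,
so it contributes no terms). -/
inductive Raw : Type
  | akey (i : ℕ) (b : Bool)   -- `a_i` when `b = false`, `b_i` when `b = true`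
  | skey (i : ℕ)              -- `s_i`
  | invk (t : Raw)            -- key inverse `(·)⁻¹`
  | pair (t₀ t₁ : Raw)        -- pairing `(·,·) : ⊤ × ⊤ → ⊤`
  | enc (t k : Raw)           -- encryption `{·}_(·) : ⊤ × A → ⊤` and `⊤ × S → ⊤`

/-- The sort of a raw term (`none` when the term is ill-sorted). -/
def Raw.srt : Raw → Option RSort
  | .akey _ _ => some .A
  | .skey _ => some .S
  | .invk t => match t.srt with
      | some .A => some .A
      | some .S => some .S
      | _ => none
  | .pair t₀ t₁ => match t₀.srt, t₁.srt with
      | some _, some _ => some .top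
      | _, _ => none
  | .enc t k => match t.srt, k.srt with
      | some _, some .A => some .top
      | some _, some .S => some .top
      | _, _ => none

def Raw.WellSorted (t : Raw) : Prop := t.srt.isSome = true

/-- Equality of terms modulo the equations of the Simple Crypto Algebra: the
congruence generated by `a_i⁻¹ = b_i`, `b_i⁻¹ = a_i`, `(k⁻¹)⁻¹ = k` for `k`
of sort A, and `k⁻¹ = k` for `k` of sort S. -/
inductive REq : Raw → Raw → Prop
  | refl (t) : REq t t
  | symm {t u} : REq t u → REq u t
  | trans {t u v} : REq t u → REq u v → REq t v
  | invk_congr {t u} : REq t u → REq (.invk t) (.invk u)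
  | pair_congr {t t' u u'} : REq t t' → REq u u' → REq (.pair t u) (.pair t' u')
  | enc_congr {t t' k k'} : REq t t' → REq k k' → REq (.enc t k) (.enc t' k')
  | akey_inv (i : ℕ) (b : Bool) : REq (.invk (.akey i b)) (.akey i (!b))
  | ainv_inv {t} : t.srt = some .A → REq (.invk (.invk t)) t
  | sinv {t} : t.srt = some .S → REq (.invk t) t

/-- A term is inverse-free when it contains no occurrence of `(·)⁻¹`. -/
def Raw.InvFree : Raw → Prop
  | .akey _ _ => True
  | .skey _ => True
  | .invk _ => False
  | .pair t₀ t₁ => t₀.InvFree ∧ t₁.InvFree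
  | .enc t k => t.InvFree ∧ k.InvFree

/-!
Erase every inverse bottom-up, turning `a_i⁻¹` into `b_i`, `b_i⁻¹` into `a_i` and
`s_i⁻¹` into `s_i`. A well-sorted term of key sort normalizes to a key constant, so each defining
equation has both sides with the same normal form, and the normal form is a congruence invariant.
Conversely each inverse step is an instance of an equation, so a well-sorted term is equal to its
normal form. An inverse-free term is its own normal form, which gives uniqueness.
-/

namespace Raw

/-- The key inverse on inverse-free terms; it is the identity on `s_i`, since `s_i⁻¹ = s_i`. -/
def keyInv : Raw → Raw
  | akey i b => akey i (!b)
  | u => u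

def normalize : Raw → Raw
  | akey i b => akey i b
  | skey i => skey i
  | invk t => t.normalize.keyInv
  | pair t₀ t₁ => pair t₀.normalize t₁.normalize
  | enc t k => enc t.normalize k.normalize

theorem invFree_normalize (t : Raw) : t.normalize.InvFree := by
  induction t with
  | akey | skey => trivial
  | invk t ih =>
    unfold normalize keyInv
    split <;> simp_all [InvFree]
  | pair _ _ ih₀ ih₁ | enc _ _ ih₀ ih₁ => exact ⟨ih₀, ih₁⟩

theorem normalize_eq_self {t : Raw} (h : t.InvFree) : t.normalize = t := by
  induction t with
  | akey | skey => rfl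
  | invk => exact h.elim
  | pair _ _ ih₀ ih₁ | enc _ _ ih₀ ih₁ => simp only [normalize, ih₀ h.1, ih₁ h.2]

theorem srt_of_srt_invk {t : Raw} {s : RSort} (h : t.invk.srt = some s) :
    t.srt = some s ∧ (s = .A ∨ s = .S) := by
  simp only [srt] at h
  split at h <;> simp_all

theorem srt_pair_eq_some {t₀ t₁ : Raw} {s : RSort} (h : (pair t₀ t₁).srt = some s) :
    s = .top := by
  simp only [srt] at h
  split at h <;> simp_all

theorem srt_enc_eq_some {t k : Raw} {s : RSort} (h : (enc t k).srt = some s) :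
    s = .top := by
  simp only [srt] at h
  split at h <;> simp_all

theorem normalize_eq_akey_of_srt_eq_A {t : Raw} (h : t.srt = some .A) :
    ∃ i b, t.normalize = akey i b := by
  induction t with
  | akey i b => exact ⟨i, b, rfl⟩
  | skey => cases h
  | invk t ih =>
    obtain ⟨i, b, hb⟩ := ih (srt_of_srt_invk h).1
    exact ⟨i, !b, by simp only [normalize, hb, keyInv]⟩
  | pair => cases srt_pair_eq_some h
  | enc => cases srt_enc_eq_some h

theorem normalize_eq_skey_of_srt_eq_S {t : Raw} (h : t.srt = some .S) :
    ∃ i, t.normalize = skey i := by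
  induction t with
  | akey => cases h
  | skey i => exact ⟨i, rfl⟩
  | invk t ih =>
    obtain ⟨i, hi⟩ := ih (srt_of_srt_invk h).1
    exact ⟨i, by simp only [normalize, hi, keyInv]⟩
  | pair => cases srt_pair_eq_some h
  | enc => cases srt_enc_eq_some h

theorem WellSorted.srt_of_invk {t : Raw} (h : t.invk.WellSorted) :
    t.srt = some .A ∨ t.srt = some .S := by
  obtain ⟨s, hs⟩ := Option.isSome_iff_exists.mp h
  obtain ⟨ht, rfl | rfl⟩ := srt_of_srt_invk hs <;> simp [ht]

theorem WellSorted.of_pair {t₀ t₁ : Raw} (h : (pair t₀ t₁).WellSorted) :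
    t₀.WellSorted ∧ t₁.WellSorted := by
  unfold WellSorted srt at h
  split at h <;> simp_all [WellSorted]

theorem WellSorted.of_enc {t k : Raw} (h : (enc t k).WellSorted) :
    t.WellSorted ∧ k.WellSorted := by
  unfold WellSorted srt at h
  split at h <;> simp_all [WellSorted]

theorem WellSorted.rEq_normalize {t : Raw} (h : t.WellSorted) : REq t t.normalize := by
  induction t with
  | akey | skey => exact .refl _
  | invk t ih =>
    have hkey := h.srt_of_invk
    have hinv : REq t.invk t.normalize.invk :=
      .invk_congr (ih (by rcases hkey with hs | hs <;> simp [WellSorted, hs]))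
    rcases hkey with hA | hS
    · obtain ⟨i, b, hb⟩ := normalize_eq_akey_of_srt_eq_A hA
      rw [hb] at hinv
      simpa only [normalize, hb, keyInv] using hinv.trans (.akey_inv i b)
    · obtain ⟨i, hi⟩ := normalize_eq_skey_of_srt_eq_S hS
      rw [hi] at hinv
      simpa only [normalize, hi, keyInv] using hinv.trans (.sinv rfl)
  | pair _ _ ih₀ ih₁ => exact .pair_congr (ih₀ h.of_pair.1) (ih₁ h.of_pair.2)
  | enc _ _ ih₀ ih₁ => exact .enc_congr (ih₀ h.of_enc.1) (ih₁ h.of_enc.2)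

theorem _root_.REq.normalize_eq {t u : Raw} (h : REq t u) : t.normalize = u.normalize := by
  induction h with
  | refl => rfl
  | symm _ ih => exact ih.symm
  | trans _ _ ih₁ ih₂ => exact ih₁.trans ih₂
  | invk_congr _ ih => simp only [normalize, ih]
  | pair_congr _ _ ih₁ ih₂ | enc_congr _ _ ih₁ ih₂ => simp only [normalize, ih₁, ih₂]
  | akey_inv => rfl
  | ainv_inv hA =>
    obtain ⟨i, b, hb⟩ := normalize_eq_akey_of_srt_eq_A hA
    simp only [normalize, hb, keyInv, Bool.not_not]
  | sinv hS =>
    obtain ⟨i, hi⟩ := normalize_eq_skey_of_srt_eq_S hS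
    simp only [normalize, hi, keyInv]

end Raw

/-- In the initial quotient term algebra over the Simple Crypto Algebra
signature, every equivalence class of terms contains exactly one inverse-free
term: every term is equal modulo the equations to a unique inverse-free
term. -/
theorem unique_inverse_free_representative (t : Raw) (h : t.WellSorted) :
    ∃! u : Raw, u.InvFree ∧ REq t u :=
  ⟨t.normalize, ⟨t.invFree_normalize, h.rEq_normalize⟩, fun _ ⟨hu, htu⟩ =>
    (Raw.normalize_eq_self hu).symm.trans htu.normalize_eq.symm⟩
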